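/- Let R be the multivariate polynomial ring over ℤ[z] in the variables a, b_0, b_1, b_2, …, and for each integer m ≥ 1 let D_m be the unique ℤ[z]-linear derivation of R satisfying D_m(a) = (m−1)(m−1+z)·a and D_m(b_j) = b_{j+1} for every j ≥ 0. Then for every n ≥ 1, (D_n ∘ D_{n−1} ∘ ⋯ ∘ D_1)(a·b_0) = a · Σ_{k=1}^{n} Jc_n^k(z) · b_k. -/

import Mathlib

open MvPolynomial

/-- The (unsigned) Jacobi-Stirling numbers of the first kind `Jc_n^k(z)`,
as polynomials in `ℤ[z]`. -/
noncomputable def Jc : ℕ → ℕ → Polynomial ℤ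
  | 0, 0 => 1
  | 0, _ + 1 => 0
  | _ + 1, 0 => 0
  | n + 1, k + 1 =>
      Jc n k + Polynomial.C (n : ℤ) * (Polynomial.C (n : ℤ) + Polynomial.X) * Jc n (k + 1)

/-- The variables `a, b₀, b₁, b₂, …`. -/
inductive HVar where
  | a : HVar
  | b : ℕ → HVar

/-- `applyChain F n x = (F n ∘ F (n−1) ∘ ⋯ ∘ F 1) x`. -/
def applyChain {R : Type*} (F : ℕ → R → R) : ℕ → R → R
  | 0, x => x
  | n + 1, x => F (n + 1) (applyChain F n x)

/-!
Write `S_n = jcSum n = Σ_{k ≤ n} Jc_n^k(z) b_k`. Since `D_{n+1}` is a derivation sending `a` to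
`n(n+z) a` and shifting `b_k ↦ b_{k+1}`, we get `D_{n+1}(a S_n) = a (n(n+z) S_n + shift S_n)`,
and the recurrence for `Jc` says exactly that `S_{n+1} = n(n+z) S_n + shift S_n`.
Induction from `S_0 = b_0` gives `(D_n ∘ ⋯ ∘ D_1)(a b_0) = a S_n`.
-/

lemma Jc_succ_zero (n : ℕ) : Jc (n + 1) 0 = 0 := rfl

lemma Jc_succ_succ (n k : ℕ) :
    Jc (n + 1) (k + 1) =
      Jc n k + (n : Polynomial ℤ) * ((n : Polynomial ℤ) + Polynomial.X) * Jc n (k + 1) := by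
  simp only [Jc, map_natCast]

lemma Jc_eq_zero_of_lt {n k : ℕ} (h : n < k) : Jc n k = 0 := by
  induction n generalizing k with
  | zero => obtain ⟨k, rfl⟩ := Nat.exists_eq_add_of_lt h; rfl
  | succ n ih =>
    obtain ⟨k, rfl⟩ := Nat.exists_eq_add_of_lt (Nat.zero_lt_of_lt h)
    rw [Jc_succ_succ, ih (by omega), ih (by omega), mul_zero, add_zero]

lemma natCast_mul_Jc_zero (n : ℕ) : (n : Polynomial ℤ) * Jc n 0 = 0 := by
  cases n with
  | zero => rw [Nat.cast_zero, zero_mul]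
  | succ n => rw [Jc_succ_zero, mul_zero]

lemma Derivation.apply_X_a_mul_sum {A : Type*} [CommRing A]
    {D : Derivation A (MvPolynomial HVar A) (MvPolynomial HVar A)} {c : A}
    (ha : D (X HVar.a) = C c * X HVar.a) (hb : ∀ j, D (X (HVar.b j)) = X (HVar.b (j + 1)))
    (s : Finset ℕ) (f : ℕ → A) :
    D (X HVar.a * ∑ k ∈ s, C (f k) * X (HVar.b k)) =
      X HVar.a * (C c * ∑ k ∈ s, C (f k) * X (HVar.b k) +
        ∑ k ∈ s, C (f k) * X (HVar.b (k + 1))) := by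
  have hterm : ∀ k, D (C (f k) * X (HVar.b k)) = C (f k) * X (HVar.b (k + 1)) := fun k => by
    rw [← smul_eq_C_mul, D.map_smul, hb, smul_eq_C_mul]
  rw [D.leibniz, map_sum, ha]
  simp only [hterm, smul_eq_mul]
  ring

noncomputable def jcSum (n : ℕ) : MvPolynomial HVar (Polynomial ℤ) :=
  ∑ k ∈ Finset.range (n + 1), C (Jc n k) * X (HVar.b k)

lemma jcSum_succ (n : ℕ) :
    jcSum (n + 1) = C ((n : Polynomial ℤ) * ((n : Polynomial ℤ) + Polynomial.X)) * jcSum n +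
      ∑ k ∈ Finset.range (n + 1), C (Jc n k) * X (HVar.b (k + 1)) := by
  set c : Polynomial ℤ := (n : Polynomial ℤ) * ((n : Polynomial ℤ) + Polynomial.X)
  -- `c Jc_n^0 = 0` (for `n = 0` because `c = 0`), so the shift drops no term of `c S_n`
  have hshift : C c * ∑ k ∈ Finset.range (n + 1), C (Jc n (k + 1)) * X (HVar.b (k + 1)) =
      C c * jcSum n := by
    have hc0 : c * Jc n 0 = 0 := by rw [mul_right_comm, natCast_mul_Jc_zero, zero_mul]
    rw [jcSum, Finset.sum_range_succ, Finset.sum_range_succ' _ n,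
      Jc_eq_zero_of_lt n.lt_succ_self, mul_add, mul_add, ← mul_assoc (C c) (C (Jc n 0)),
      ← map_mul, hc0]
    simp only [map_zero, zero_mul, mul_zero, add_zero]
  have hterm : ∀ k, C (Jc (n + 1) (k + 1)) * X (HVar.b (k + 1)) =
      C (Jc n k) * X (HVar.b (k + 1)) + C c * (C (Jc n (k + 1)) * X (HVar.b (k + 1))) := fun k => by
    rw [Jc_succ_succ, map_add, map_mul, add_mul, mul_assoc]
  rw [jcSum, Finset.sum_range_succ', Jc_succ_zero, map_zero, zero_mul, add_zero,
    Finset.sum_congr rfl fun k _ => hterm k, Finset.sum_add_distrib, ← Finset.mul_sum, hshift,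
    add_comm]

lemma jcSum_eq_sum_Icc {n : ℕ} (hn : 1 ≤ n) :
    jcSum n = ∑ k ∈ Finset.Icc 1 n, C (Jc n k) * X (HVar.b k) := by
  obtain ⟨n, rfl⟩ := Nat.exists_eq_add_of_le' hn
  rw [jcSum, Finset.range_eq_Ico, Finset.sum_eq_sum_Ico_succ_bot (Nat.succ_pos _), Jc_succ_zero,
    map_zero, zero_mul, zero_add]
  rfl

lemma applyChain_X_a_mul_X_b_zero
    (D : ℕ → Derivation (Polynomial ℤ) (MvPolynomial HVar (Polynomial ℤ))
      (MvPolynomial HVar (Polynomial ℤ)))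
    (ha : ∀ n : ℕ, (D (n + 1)) (X HVar.a) =
      C ((n : Polynomial ℤ) * ((n : Polynomial ℤ) + Polynomial.X)) * X HVar.a)
    (hb : ∀ n j : ℕ, (D (n + 1)) (X (HVar.b j)) = X (HVar.b (j + 1))) (n : ℕ) :
    applyChain (fun m p => (D m) p) n (X HVar.a * X (HVar.b 0)) = X HVar.a * jcSum n := by
  induction n with
  | zero => simp [applyChain, jcSum, Jc]
  | succ n ih =>
    rw [applyChain, ih, jcSum, (D (n + 1)).apply_X_a_mul_sum (ha n) (hb n), ← jcSum, jcSum_succ]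

/-- If for each `m ≥ 1`, `D m` is a `ℤ[z]`-linear derivation of `ℤ[z][a, b₀, b₁, …]`
with `D m (a) = (m−1)(m−1+z)·a` and `D m (bⱼ) = b_{j+1}`, then
`(D n ∘ D (n−1) ∘ ⋯ ∘ D 1)(a b₀) = a Σ_{k=1}^{n} Jcₙᵏ(z) b_k`. -/
theorem grammar_Jc
    (D : ℕ → Derivation (Polynomial ℤ) (MvPolynomial HVar (Polynomial ℤ))
      (MvPolynomial HVar (Polynomial ℤ)))
    (ha : ∀ m : ℕ, 1 ≤ m →
      (D m) (X HVar.a) =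
        C (((m : Polynomial ℤ) - 1) * ((m : Polynomial ℤ) - 1 + Polynomial.X)) * X HVar.a)
    (hb : ∀ m : ℕ, 1 ≤ m → ∀ j : ℕ, (D m) (X (HVar.b j)) = X (HVar.b (j + 1))) :
    ∀ n : ℕ, 1 ≤ n →
      applyChain (fun m p => (D m) p) n (X HVar.a * X (HVar.b 0)) =
        X HVar.a * ∑ k ∈ Finset.Icc 1 n, C (Jc n k) * X (HVar.b k) := by
  have ha' : ∀ n : ℕ, (D (n + 1)) (X HVar.a) =
      C ((n : Polynomial ℤ) * ((n : Polynomial ℤ) + Polynomial.X)) * X HVar.a := fun n => by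
    rw [ha (n + 1) n.succ_pos, Nat.cast_succ, add_sub_cancel_right]
  intro n hn
  rw [applyChain_X_a_mul_X_b_zero D ha' (fun n => hb (n + 1) n.succ_pos) n, jcSum_eq_sum_Icc hn]
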